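/- arXiv:1907.02004 — 4 statements merged into one kernel-verified Lean document; each statement's English description precedes it below -/
import Mathlib

section
/- For all integers k ≥ 2 and all n ≥ 3 divisible by k, there exists a balanced k-partite graph F on n vertices such that δ(F) ≥ ⌈n/2⌉ + ⌊(n+2)/(2·⌈(k+1)/2⌉)⌋ − n/k − 1, F contains an independent set of size ⌈(n+1)/2⌉, and F does not have a Hamiltonian cycle. -/
open SimpleGraph Finset

/-- `G` is a balanced `k`-partite graph: the vertex set can be partitioned into `k` parts,
each of size `|V|/k`, such that every edge joins vertices in different parts. -/
def IsBalancedKPartite {V : Type*} [Fintype V] [DecidableEq V]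
    (G : SimpleGraph V) (k : ℕ) : Prop :=
  ∃ P : V → Fin k,
    (∀ i : Fin k, (Finset.univ.filter fun v => P v = i).card = Fintype.card V / k) ∧
    (∀ u v : V, G.Adj u v → P u ≠ P v)

/-- The degree bound `⌈n/2⌉ + ⌊(n+2)/(2⌈(k+1)/2⌉)⌋ − n/k`, as a rational number. -/
def degBound (n k : ℕ) : ℚ :=
  (⌈(n : ℚ) / 2⌉ : ℚ) + (⌊((n : ℚ) + 2) / (2 * (⌈((k : ℚ) + 1) / 2⌉ : ℚ))⌋ : ℚ) - (n : ℚ) / k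

/-!
Take the complete balanced `k`-partite graph on `n` vertices and delete every edge inside a set `S`
of `⌈(n+1)/2⌉` vertices, spread over the first `l = ⌈(k+1)/2⌉` parts so that each of them meets `S`
in at least `⌊|S|/l⌋ = ⌊(n+2)/(2l)⌋` vertices. A vertex outside `S` keeps degree `n - n/k`; a
vertex of `S` loses only its edges to `S` outside its own part, which leaves at least the required
degree. As `S` is independent with `|S| > n/2`, there is no Hamiltonian cycle: on a cycle through
all `n` vertices no two consecutive vertices lie in `S`, so `2|S| ≤ n`.
-/

namespace SimpleGraph

theorem ncard_neighborSet_eq_degree {V : Type*} [Fintype V] (G : SimpleGraph V)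
    [DecidableRel G.Adj] (v : V) : (G.neighborSet v).ncard = G.degree v := by
  rw [Set.ncard_eq_toFinset_card']
  rfl

variable {V : Type*} [Fintype V] [DecidableEq V] {G : SimpleGraph V}

theorem Walk.IsHamiltonianCycle.two_mul_card_le_of_isIndepSet {a : V} {p : G.Walk a a}
    (hp : p.IsHamiltonianCycle) {S : Finset V} (hS : G.IsIndepSet S) :
    2 * #S ≤ Fintype.card V := by
  set n := p.length
  have h3 : 3 ≤ n := hp.isCycle.three_le_length
  let g : ℕ → ℕ := fun i => if p.getVert i ∈ S then 1 else 0
  have hsum : ∑ i ∈ range n, g i = #S := by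
    rw [sum_boole, Nat.cast_id]
    refine card_nbij p.getVert (fun i hi => (mem_filter.1 hi).2) ?_ ?_
    · intro i hi j hj hij
      simp only [coe_filter, mem_range, Set.mem_ofPred_eq] at hi hj
      exact hp.isCycle.getVert_injOn' (by simp; omega) (by simp; omega) hij
    · intro v hv
      obtain ⟨i, rfl, hi⟩ := Walk.mem_support_iff_exists_getVert.1 (hp.mem_support v)
      rcases hi.lt_or_eq with hi | rfl
      · exact ⟨i, mem_filter.2 ⟨mem_range.2 hi, hv⟩, rfl⟩
      · rw [Walk.getVert_length] at hv
        exact ⟨0, mem_filter.2 ⟨mem_range.2 (by omega), by simpa using hv⟩, by simp⟩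
  have hshift : ∑ i ∈ range n, g (i + 1) = ∑ i ∈ range n, g i := by
    have hgn : g n = g 0 := by simp [g, n, Walk.getVert_length]
    have h := (sum_range_succ' g n).symm.trans (sum_range_succ g n)
    omega
  have hpair : ∀ i ∈ range n, g i + g (i + 1) ≤ 1 := by
    intro i hi
    have hadj := p.adj_getVert_succ (mem_range.1 hi)
    by_cases h1 : p.getVert i ∈ S <;> by_cases h2 : p.getVert (i + 1) ∈ S <;> simp [g, h1, h2]
    exact hS (mem_coe.2 h1) (mem_coe.2 h2) hadj.ne hadj
  calc 2 * #S = ∑ i ∈ range n, (g i + g (i + 1)) := by rw [sum_add_distrib, hshift, hsum]; ring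
    _ ≤ ∑ _i ∈ range n, 1 := sum_le_sum hpair
    _ = Fintype.card V := by simp [n, hp.length_eq]

theorem not_isHamiltonian_of_isIndepSet (hV : Fintype.card V ≠ 1) {S : Finset V}
    (hS : G.IsIndepSet S) (hcard : Fintype.card V < 2 * #S) : ¬ G.IsHamiltonian := fun hG =>
  have ⟨_, _, hp⟩ := hG hV
  (hp.two_mul_card_le_of_isIndepSet hS).not_gt hcard

end SimpleGraph

section Construction

variable {V ι : Type*}

theorem exists_card_fiber_eq [Fintype V] {k m : ℕ} (h : Fintype.card V = k * m) :
    ∃ P : V → Fin k, ∀ i, #{v | P v = i} = m := by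
  let e : V ≃ Fin k × Fin m := Fintype.equivOfCardEq (by simp [h])
  refine ⟨fun v => (e v).1, fun i => ?_⟩
  rw [card_equiv e (t := {i} ×ˢ univ) (fun v => by simp [Prod.ext_iff, eq_comm])]
  simp

@[simps]
def multipartiteMinusClique (P : V → ι) (S : Finset V) : SimpleGraph V where
  Adj u v := P u ≠ P v ∧ ¬(u ∈ S ∧ v ∈ S)

theorem multipartiteMinusClique.isIndepSet (P : V → ι) (S : Finset V) :
    (multipartiteMinusClique P S).IsIndepSet S :=
  fun _ hu _ hv _ h => h.2 ⟨hu, hv⟩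

variable [Fintype V] [DecidableEq V] [DecidableEq ι]

instance (P : V → ι) (S : Finset V) : DecidableRel (multipartiteMinusClique P S).Adj :=
  fun _ _ => inferInstanceAs (Decidable (_ ∧ _))

theorem multipartiteMinusClique.degree_add_card (P : V → ι) (S : Finset V) (v : V) :
    (multipartiteMinusClique P S).degree v + #{u | P u = P v ∨ (v ∈ S ∧ u ∈ S)} =
      Fintype.card V := by
  rw [degree, neighborFinset_eq_filter, ← card_univ, ← card_filter_add_card_filter_not
    (s := univ) (fun u => P u = P v ∨ (v ∈ S ∧ u ∈ S)), add_comm]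
  congr 2
  ext u
  simp only [mem_filter, mem_univ, true_and, multipartiteMinusClique_adj, ne_comm, not_or]

theorem multipartiteMinusClique.card_add_le_degree_add (P : V → ι) (S : Finset V) {m q : ℕ}
    (hfib : ∀ v, #{u | P u = P v} = m) (hS : ∀ v ∈ S, q ≤ #{u ∈ S | P u = P v})
    (hqS : q ≤ #S) (v : V) :
    Fintype.card V + q ≤ (multipartiteMinusClique P S).degree v + m + #S := by
  rw [← degree_add_card P S v, ← hfib v]
  by_cases hv : v ∈ S
  · have hunion := card_union_add_card_inter {u | P u = P v} S
    have hinter : {u ∈ S | P u = P v} = ({u | P u = P v} : Finset V) ∩ S := by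
      ext; simp [and_comm]
    simp only [hv, true_and, filter_or, filter_mem_eq_inter, univ_inter]
    have hq := hinter ▸ hS v hv
    omega
  · simp only [hv, false_and, or_false]
    omega

theorem exists_card_eq_le_card_inter_fiber (P : V → ι) (I : Finset ι) {m q s : ℕ}
    (hfib : ∀ i ∈ I, #{v | P v = i} = m) (hqs : #I * q ≤ s) (hsm : s ≤ #I * m) :
    ∃ S : Finset V, #S = s ∧ ∀ v ∈ S, q ≤ #{u ∈ S | P u = P v} := by
  have hR : ∀ i ∈ I, ∃ R ⊆ ({v | P v = i} : Finset V), #R = q := fun i hi =>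
    exists_subset_card_eq <|
      hfib i hi ▸ Nat.le_of_mul_le_mul_left (hqs.trans hsm) (card_pos.2 ⟨i, hi⟩)
  choose! R hRfib hRcard using hR
  have hdisj : (I : Set ι).PairwiseDisjoint R := by
    intro i _ j _ hij
    exact disjoint_left.2 fun v hvi hvj => hij <|
      (mem_filter.1 (hRfib i ‹_› hvi)).2.symm.trans (mem_filter.1 (hRfib j ‹_› hvj)).2
  have hT : #{v | P v ∈ I} = #I * m := by
    rw [card_eq_sum_card_fiberwise (f := P) (t := I) ?_, sum_const_nat]
    · intro i hi
      rw [filter_filter, ← hfib i hi]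
      exact congrArg card (filter_congr fun v _ => and_iff_right_of_imp fun h => h ▸ hi)
    · intro v hv
      exact (mem_filter.1 hv).2
  have hRT : I.biUnion R ⊆ ({v | P v ∈ I} : Finset V) := fun v hv => by
    obtain ⟨i, hi, hv⟩ := mem_biUnion.1 hv
    simpa [(mem_filter.1 (hRfib i hi hv)).2] using hi
  obtain ⟨S, hRS, hST, hS⟩ := exists_subsuperset_card_eq hRT
    (by rw [card_biUnion hdisj, sum_congr rfl hRcard, sum_const, smul_eq_mul]; exact hqs)
    (hT ▸ hsm)
  refine ⟨S, hS, fun v hv => ?_⟩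
  have hvI : P v ∈ I := (mem_filter.1 (hST hv)).2
  rw [← hRcard _ hvI]
  refine card_le_card fun u hu => mem_filter.2 ⟨hRS (mem_biUnion.2 ⟨_, hvI, hu⟩), ?_⟩
  exact (mem_filter.1 (hRfib _ hvI hu)).2

end Construction

theorem Rat.ceil_natCast_div_two (n : ℕ) : ⌈(n : ℚ) / 2⌉ = ((n + 1) / 2 : ℕ) := by
  have := Rat.ceil_natCast_div_natCast n 2
  push_cast at this ⊢
  omega

theorem Rat.ceil_natCast_add_one_div_two (n : ℕ) : ⌈((n : ℚ) + 1) / 2⌉ = (n / 2 + 1 : ℕ) := by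
  have := Rat.ceil_natCast_div_natCast (n + 1) 2
  push_cast at this ⊢
  omega

theorem degBound_eq {n k : ℕ} (hkn : k ∣ n) :
    degBound n k = ((n + 1) / 2 : ℕ) + ((n / 2 + 1) / (k / 2 + 1) : ℕ) - ((n / k : ℕ) : ℚ) := by
  have hfloor :
      ⌊((n : ℚ) + 2) / (2 * ((k / 2 + 1 : ℕ) : ℚ))⌋ = ((n / 2 + 1) / (k / 2 + 1) : ℕ) := by
    rw [show n / 2 + 1 = (n + 2) / 2 by omega, Nat.div_div_eq_div_mul]
    exact_mod_cast Rat.floor_natCast_div_natCast (n + 2) (2 * (k / 2 + 1))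
  rw [degBound, Rat.ceil_natCast_div_two, Rat.ceil_natCast_add_one_div_two, Int.cast_natCast,
    Int.cast_natCast, hfloor, Int.cast_natCast, Nat.cast_div_charZero hkn]

theorem div_two_add_one_le_mul_div {n k : ℕ} (hkn : k ∣ n) (hn : 0 < n) :
    n / 2 + 1 ≤ (k / 2 + 1) * (n / k) := by
  obtain ⟨m, rfl⟩ := hkn
  have hm : 0 < m := Nat.pos_of_mul_pos_left hn
  have h : (k + 1) * m ≤ 2 * (k / 2 + 1) * m := Nat.mul_le_mul_right m (by omega)
  rw [add_mul, one_mul, mul_assoc] at h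
  rw [Nat.mul_div_cancel_left _ (Nat.pos_of_mul_pos_right hn)]
  omega

/-- **Tightness example.** For all `k ≥ 2` and `n ≥ 3` divisible by `k` there is a balanced
`k`-partite graph `F` on `n` vertices with minimum degree at least
`⌈n/2⌉ + ⌊(n+2)/(2⌈(k+1)/2⌉)⌋ − n/k − 1`, containing an independent set of size `⌈(n+1)/2⌉`,
which has no Hamiltonian cycle. -/
theorem exists_tight_example (k n : ℕ) (hk : 2 ≤ k) (hn : 3 ≤ n) (hdvd : k ∣ n) :
    ∃ F : SimpleGraph (Fin n),
      IsBalancedKPartite F k ∧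
      (∀ v : Fin n, degBound n k - 1 ≤ ((F.neighborSet v).ncard : ℚ)) ∧
      (∃ s : Finset (Fin n), s.card = ⌈((n : ℚ) + 1) / 2⌉ ∧
        ∀ u ∈ s, ∀ v ∈ s, u ≠ v → ¬ F.Adj u v) ∧
      ¬ F.IsHamiltonian := by
  -- `l = ⌈(k+1)/2⌉`, `s = ⌈(n+1)/2⌉` and `q = ⌊(n+2)/(2l)⌋`, as in `degBound`
  set m := n / k
  set l := k / 2 + 1
  set s := n / 2 + 1
  set q := s / l
  obtain ⟨P, hP⟩ := exists_card_fiber_eq (V := Fin n) (k := k) (m := m)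
    (by rw [Fintype.card_fin, Nat.mul_div_cancel' hdvd])
  have hI : #{i : Fin k | i < l} = l := by rw [Fin.card_filter_val_lt]; omega
  obtain ⟨S, hSs, hSq⟩ := exists_card_eq_le_card_inter_fiber (q := q) (s := s) P
    {i : Fin k | i < l} (fun i _ => hP i) (by rw [hI]; exact Nat.mul_div_le s l)
    (by rw [hI]; exact div_two_add_one_le_mul_div hdvd (by omega))
  have hindep := multipartiteMinusClique.isIndepSet P S
  refine ⟨multipartiteMinusClique P S,
    ⟨P, fun i => by rw [hP, Fintype.card_fin], fun _ _ h => h.1⟩, fun v => ?_,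
    ⟨S, ?_, fun u hu v hv huv => hindep hu hv huv⟩,
    not_isHamiltonian_of_isIndepSet (by simp; omega) hindep (by simp; omega)⟩
  · have hdeg := multipartiteMinusClique.card_add_le_degree_add P S (fun v => hP (P v)) hSq
      (hSs ▸ Nat.div_le_self s l) v
    rw [Fintype.card_fin, hSs] at hdeg
    rw [degBound_eq hdvd, ncard_neighborSet_eq_degree, sub_sub, sub_le_iff_le_add]
    exact_mod_cast (by omega : (n + 1) / 2 + q ≤ _ + (m + 1))
  · rw [hSs, Rat.ceil_natCast_add_one_div_two]
end

section
/- Let n ≥ 8 be divisible by 4 and let k = n/2. There exists a balanced k-partite graph F_3 on n vertices such that δ(F_3) ≥ n/2 − 1, F_3 is 2-connected, the independence number of F_3 equals n/2, and F_3 does not have a Hamiltonian cycle. -/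
/-!
In `F3` the upper half `I = {n/2, …, n-1}` is an independent set of half the vertices, so a
Hamiltonian cycle would have to alternate between `I` and its complement: every vertex outside `I`
would need two neighbours in `I`, but `0` has only one. The matching `i ↔ n/2 + i` is perfect, so
no independent set is larger than `n/2`; the parts of the balanced partition are the pairs
`{2i, 2i+1}`, which are non-edges because `n/2` is even.
-/

open SimpleGraph Finset

/-- `G` is 2-connected: it has at least 3 vertices and remains connected after the
deletion of any single vertex. -/
def TwoConnected {V : Type*} [Fintype V] (G : SimpleGraph V) : Prop :=
  3 ≤ Fintype.card V ∧ ∀ v : V, (G.induce {w | w ≠ v}).Connected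

theorem List.forall_imp_of_countP_le {α : Type*} {l : List α} {p q : α → Bool}
    (hpq : ∀ x ∈ l, p x → q x) (h : l.countP q ≤ l.countP p) : ∀ x ∈ l, q x → p x := by
  induction l with
  | nil => simp
  | cons a l ih =>
    simp only [List.mem_cons, forall_eq_or_imp, List.countP_cons] at hpq h ⊢
    have hmono := List.countP_mono_left hpq.2
    refine ⟨fun hq => ?_, ih hpq.2 ?_⟩ <;> by_cases hp : p a <;> simp_all <;> omega

namespace SimpleGraph.Walk

variable {V : Type*} [Fintype V] [DecidableEq V] {G : SimpleGraph V} {u : V} {p : G.Walk u u}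

lemma IsHamiltonianCycle.countP_support_tail (hp : p.IsHamiltonianCycle) (q : V → Prop)
    [DecidablePred q] : p.support.tail.countP (q ·) = #{v | q v} := by
  rw [← hp.isCycle.support_nodup.card_eq_countP, ← support_tail_of_not_nil p hp.isCycle.not_nil,
    hp.isHamiltonian_tail.toFinset_support]

lemma IsHamiltonianCycle.countP_darts_snd (hp : p.IsHamiltonianCycle) (q : V → Prop)
    [DecidablePred q] : p.darts.countP (q ·.snd) = #{v | q v} := by
  rw [← hp.countP_support_tail, ← map_snd_darts, List.countP_map]
  rfl

lemma IsHamiltonianCycle.countP_darts_fst (hp : p.IsHamiltonianCycle) (q : V → Prop)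
    [DecidablePred q] : p.darts.countP (q ·.fst) = #{v | q v} := by
  rw [← hp.countP_support_tail, (tail_support_perm_dropLast_support p).countP_eq,
    ← map_fst_darts, List.countP_map]
  rfl

lemma IsHamiltonianCycle.fst_mem_or_snd_mem (hp : p.IsHamiltonianCycle) {S : Finset V}
    (hS : G.IsIndepSet S) (hcard : Fintype.card V = 2 * #S) :
    ∀ d ∈ p.darts, d.fst ∈ S ∨ d.snd ∈ S := by
  -- `|S|` darts leave `S` and `|S|` darts enter `S`; no dart does both, and there are `2|S|` darts.
  have hfst := hp.countP_darts_fst (· ∈ S)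
  have hsnd := hp.countP_darts_snd (· ∈ S)
  have hlen : p.darts.length = 2 * #S := by rw [length_darts, hp.length_eq, hcard]
  have hsplit := p.darts.length_eq_countP_add_countP (fun d => decide (d.fst ∈ S))
  have key := List.forall_imp_of_countP_le (l := p.darts) (p := fun d => decide (d.snd ∈ S))
    (q := fun d => !decide (d.fst ∈ S))
    (fun d _ h => by simpa using fun h' => hS h' (by simpa using h) (G.ne_of_adj d.adj) d.adj)
    (by simp only [filter_univ_mem, decide_not, Bool.decide_eq_true] at hfst hsnd hsplit; omega)
  intro d hd
  by_contra! h
  simpa [h.1, h.2] using key d hd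

lemma IsHamiltonianCycle.exists_adj_adj_of_isIndepSet (hp : p.IsHamiltonianCycle) {S : Finset V}
    (hS : G.IsIndepSet S) (hcard : Fintype.card V = 2 * #S) {v : V} (hv : v ∉ S) :
    ∃ a ∈ S, ∃ b ∈ S, a ≠ b ∧ G.Adj v a ∧ G.Adj v b := by
  have hv_tail : v ∈ p.support.tail := by
    rw [← support_tail_of_not_nil p hp.isCycle.not_nil]; exact hp.isHamiltonian_tail.mem_support v
  obtain ⟨d₁, hd₁, hd₁v⟩ : ∃ d ∈ p.darts, d.snd = v := by
    rwa [← map_snd_darts, List.mem_map] at hv_tail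
  obtain ⟨d₂, hd₂, hd₂v⟩ : ∃ d ∈ p.darts, d.fst = v := by
    rwa [(tail_support_perm_dropLast_support p).mem_iff, ← map_fst_darts, List.mem_map] at hv_tail
  have ha : d₁.fst ∈ S := (hp.fst_mem_or_snd_mem hS hcard d₁ hd₁).resolve_right (hd₁v ▸ hv)
  have hb : d₂.snd ∈ S := (hp.fst_mem_or_snd_mem hS hcard d₂ hd₂).resolve_left (hd₂v ▸ hv)
  refine ⟨d₁.fst, ha, d₂.snd, hb, fun hab => ?_, hd₁v ▸ d₁.adj.symm, hd₂v ▸ d₂.adj⟩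
  have hedge : d₁.edge = d₂.edge := by
    rw [Dart.edge, Dart.edge, Sym2.mk_eq_mk_iff]
    exact Or.inr (Prod.ext hab (hd₁v.trans hd₂v.symm))
  have hd : d₁ = d₂ := List.inj_on_of_nodup_map hp.isCycle.edges_nodup hd₁ hd₂ hedge
  exact hv (hd₂v ▸ hd ▸ ha)

end SimpleGraph.Walk

namespace SimpleGraph

lemma IsHamiltonian.exists_adj_adj_of_isIndepSet {V : Type*} [Fintype V] [DecidableEq V]
    {G : SimpleGraph V} (hG : G.IsHamiltonian) {S : Finset V}
    (hS : G.IsIndepSet S) (hcard : Fintype.card V = 2 * #S) {v : V} (hv : v ∉ S) :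
    ∃ a ∈ S, ∃ b ∈ S, a ≠ b ∧ G.Adj v a ∧ G.Adj v b := by
  obtain ⟨u, p, hp⟩ := hG (by omega)
  exact hp.exists_adj_adj_of_isIndepSet hS hcard hv

lemma IsIndepSet.card_le_of_forall_adj {V ι : Type*} [Fintype ι] {G : SimpleGraph V}
    {s : Finset V} (hs : G.IsIndepSet s)
    (f : V → ι) (hf : ∀ u v, u ≠ v → f u = f v → G.Adj u v) : #s ≤ Fintype.card ι :=
  card_le_card_of_injOn f (fun _ _ => mem_univ _) fun u hu v hv huv =>
    by_contra fun h => hs hu hv h (hf u v h huv)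

end SimpleGraph

lemma Fin.card_filter_le_val_lt {n a b : ℕ} (hb : b ≤ n) :
    #{v : Fin n | a ≤ v.val ∧ v.val < b} = b - a := by
  rw [← Nat.card_Ico, ← card_attachFin (n := n) (Ico a b) fun m hm => by rw [mem_Ico] at hm; omega]
  congr 1
  ext v
  simp [mem_attachFin]

lemma Fin.card_filter_le_val (n a : ℕ) : #{v : Fin n | a ≤ v.val} = n - a := by
  rw [← Fin.card_filter_le_val_lt le_rfl]
  congr 1
  ext v
  simp

lemma Fin.exists_ne_of_le_val_le {n a : ℕ} (ha : a + 1 < n) (v : Fin n) :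
    ∃ w : Fin n, a ≤ w.val ∧ w.val ≤ a + 1 ∧ w.val ≠ v.val := by
  by_cases hv : v.val = a
  · exact ⟨⟨a + 1, ha⟩, by simp only; omega⟩
  · exact ⟨⟨a, by omega⟩, by simp only; omega⟩

lemma SimpleGraph.le_ncard_neighborSet_of_forall_adj {n a b : ℕ} {G : SimpleGraph (Fin n)}
    {v : Fin n} (hb : b ≤ n) (h : ∀ w : Fin n, a ≤ w.val → w.val < b → G.Adj v w) :
    b - a ≤ (G.neighborSet v).ncard := by
  rw [← Fin.card_filter_le_val_lt hb, ← Set.ncard_coe_finset]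
  exact Set.ncard_le_ncard (fun w hw => by simp at hw; exact h w hw.1 hw.2) (Set.toFinite _)

/-- With `m = n / 2`: the vertices `0, …, m - 1` form a clique minus the matching `{2i, 2i + 1}`,
the vertices `m, …, n - 1` are independent, and each of `1, …, m - 1` is joined to all of them,
while `0` is joined only to `m`. -/
def F3 (n : ℕ) : SimpleGraph (Fin n) :=
  SimpleGraph.fromRel fun u v =>
    (u.val < n / 2 ∧ v.val < n / 2 ∧ u.val / 2 ≠ v.val / 2) ∨
    (u.val < n / 2 ∧ n / 2 ≤ v.val ∧ (0 < u.val ∨ v.val = n / 2))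

lemma F3_adj {n : ℕ} {u v : Fin n} : (F3 n).Adj u v ↔ u.val ≠ v.val ∧
    ((u.val < n / 2 ∧ v.val < n / 2 ∧ u.val / 2 ≠ v.val / 2) ∨
      (u.val < n / 2 ∧ n / 2 ≤ v.val ∧ (0 < u.val ∨ v.val = n / 2)) ∨
      (v.val < n / 2 ∧ n / 2 ≤ u.val ∧ (0 < v.val ∨ u.val = n / 2))) := by
  simp only [F3, fromRel_adj, ne_eq, Fin.val_inj]
  tauto

lemma isBalancedKPartite_F3 {n : ℕ} (hn : 4 ∣ n) : IsBalancedKPartite (F3 n) (n / 2) := by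
  refine ⟨fun v => ⟨v.val / 2, by omega⟩, fun i => ?_, fun u v huv hP => ?_⟩
  · have hi := i.isLt
    rw [Fintype.card_fin, Nat.div_div_self (dvd_trans (by norm_num) hn) (by omega)]
    trans #{v : Fin n | 2 * i.val ≤ v.val ∧ v.val < 2 * i.val + 2}
    · congr 1
      ext v
      simp only [mem_filter, mem_univ, true_and, Fin.ext_iff]
      omega
    · rw [Fin.card_filter_le_val_lt (by omega)]
      omega
  · rw [Fin.ext_iff] at hP
    rw [F3_adj] at huv
    dsimp only at hP
    omega

lemma le_ncard_neighborSet_F3 {n : ℕ} (v : Fin n) : n / 2 - 1 ≤ ((F3 n).neighborSet v).ncard := by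
  have hv := v.isLt
  rcases Nat.eq_zero_or_pos v.val with h0 | hpos
  · exact (le_ncard_neighborSet_of_forall_adj (a := 2) (b := n / 2 + 1) (by omega)
      fun w hwa hwb => F3_adj.2 (by omega)).trans' (by omega)
  rcases lt_or_ge v.val (n / 2) with hC | hI
  · exact (le_ncard_neighborSet_of_forall_adj (a := n / 2) (b := n) le_rfl
      fun w hwa hwb => F3_adj.2 (by omega)).trans' (by omega)
  · exact le_ncard_neighborSet_of_forall_adj (a := 1) (b := n / 2) (by omega)
      fun w hwa hwb => F3_adj.2 (by omega)

lemma isIndepSet_F3_filter_half_le (n : ℕ) :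
    (F3 n).IsIndepSet ↑({v : Fin n | n / 2 ≤ v.val} : Finset (Fin n)) := by
  intro u hu v hv _ huv
  simp only [coe_filter, mem_univ, true_and, Set.mem_ofPred_eq] at hu hv
  rw [F3_adj] at huv
  omega

lemma card_le_of_isIndepSet_F3 {n : ℕ} (hn : 2 ∣ n) {s : Finset (Fin n)}
    (hs : (F3 n).IsIndepSet s) : #s ≤ n / 2 := by
  have h := hs.card_le_of_forall_adj (ι := Fin (n / 2))
    (fun v => if h : v.val < n / 2 then ⟨v.val, h⟩ else ⟨v.val - n / 2, by omega⟩)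
    fun u v huv hf => F3_adj.2 ?_
  · simpa using h
  · have := u.isLt; have := v.isLt
    have huv' : u.val ≠ v.val := Fin.val_ne_iff.2 huv
    split_ifs at hf <;> simp only [Fin.mk.injEq] at hf <;> omega

lemma not_isHamiltonian_F3 {n : ℕ} (hn : 2 ∣ n) (hpos : 0 < n) : ¬ (F3 n).IsHamiltonian := by
  intro hG
  obtain ⟨a, ha, b, hb, hab, h0a, h0b⟩ := hG.exists_adj_adj_of_isIndepSet
    (isIndepSet_F3_filter_half_le n) (by rw [Fin.card_filter_le_val, Fintype.card_fin]; omega)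
    (v := ⟨0, hpos⟩) (by simp; omega)
  simp only [mem_filter, mem_univ, true_and] at ha hb
  rw [F3_adj] at h0a h0b
  exact hab (Fin.ext (by simp at h0a h0b; omega))

lemma twoConnected_F3 {n : ℕ} (hn : 8 ≤ n) : TwoConnected (F3 n) := by
  refine ⟨by rw [Fintype.card_fin]; omega, fun v => ?_⟩
  -- Every vertex reaches the hub `h ∈ I`: `1, …, n/2 - 1` directly, the rest of `I` through `b`,
  -- and `0` through `c`.
  obtain ⟨h, hh₁, hh₂, hhv⟩ := Fin.exists_ne_of_le_val_le (a := n / 2) (by omega) v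
  obtain ⟨b, hb₁, hb₂, hbv⟩ := Fin.exists_ne_of_le_val_le (a := 1) (by omega) v
  obtain ⟨c, hc₁, hc₂, hcv⟩ := Fin.exists_ne_of_le_val_le (a := 2) (by omega) v
  have reach : ∀ x y (hx : x ≠ v) (hy : y ≠ v), (F3 n).Adj x y →
      ((F3 n).induce {w | w ≠ v}).Reachable ⟨x, hx⟩ ⟨y, hy⟩ :=
    fun _ _ _ _ hxy => Adj.reachable (G := (F3 n).induce _) hxy
  have hb : b ≠ v := Fin.val_ne_iff.1 hbv
  have hc : c ≠ v := Fin.val_ne_iff.1 hcv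
  rw [connected_iff_exists_forall_reachable]
  refine ⟨⟨h, Fin.val_ne_iff.1 hhv⟩, fun ⟨w, hw⟩ => ?_⟩
  have hwv : w.val ≠ v.val := Fin.val_ne_iff.2 hw
  have := w.isLt
  by_cases hwh : w = h
  · subst hwh; rfl
  have hwh' : w.val ≠ h.val := Fin.val_ne_iff.2 hwh
  by_cases hwI : n / 2 ≤ w.val
  · exact (reach _ _ _ hb (F3_adj.2 (by omega))).trans (reach _ _ hb _ (F3_adj.2 (by omega)))
  by_cases hw0 : w.val = 0
  · exact (reach _ _ _ hc (F3_adj.2 (by omega))).trans (reach _ _ hc _ (F3_adj.2 (by omega)))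
  · exact reach _ _ _ _ (F3_adj.2 (by omega))

/-- For `n ≥ 8` divisible by `4` and `k = n/2`, there is a balanced `k`-partite graph `F₃`
on `n` vertices with minimum degree at least `n/2 − 1`, which is 2-connected, has
independence number exactly `n/2`, and has no Hamiltonian cycle. -/
theorem exists_F3 (n : ℕ) (hn : 8 ≤ n) (hdvd : 4 ∣ n) :
    ∃ F : SimpleGraph (Fin n),
      IsBalancedKPartite F (n / 2) ∧
      (∀ v : Fin n, n / 2 - 1 ≤ (F.neighborSet v).ncard) ∧
      TwoConnected F ∧
      ((∃ s : Finset (Fin n), s.card = n / 2 ∧ ∀ u ∈ s, ∀ v ∈ s, u ≠ v → ¬ F.Adj u v) ∧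
        ∀ s : Finset (Fin n), (∀ u ∈ s, ∀ v ∈ s, u ≠ v → ¬ F.Adj u v) → s.card ≤ n / 2) ∧
      ¬ F.IsHamiltonian := by
  have h2 : 2 ∣ n := dvd_trans (by norm_num) hdvd
  refine ⟨F3 n, isBalancedKPartite_F3 hdvd, le_ncard_neighborSet_F3, twoConnected_F3 hn,
    ⟨⟨_, ?_, fun u hu v hv huv => isIndepSet_F3_filter_half_le n hu hv huv⟩,
      fun s hs => card_le_of_isIndepSet_F3 h2 fun u hu v hv huv => hs u hu v hv huv⟩,
    not_isHamiltonian_F3 h2 (by omega)⟩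
  rw [Fin.card_filter_le_val]
  omega
end

section
/- Let k ≥ 3, let n be divisible by k with n ≥ 2k, and let G be a balanced k-partite graph on n vertices with δ(G) ≥ ⌈n/2⌉ + ⌊(n+2)/(2·⌈(k+1)/2⌉)⌋ − n/k. If it is not the case that k is even and n = 2k, then G is 2-connected. -/
/-! If deleting `v` disconnects `G`, one side `S` of the cut has at most `(n - 1) / 2` vertices
and all neighbours of `S` lie in `S ∪ {v}`. Some colour class meets `S` in `c ≥ |S| / k`
vertices, and a vertex of that class has degree at most `|S| + 1 - c`. Comparing this with the
degree bound is a parity computation in `k` and `n / k`, which fails exactly when `k` is even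
and `n = 2k`. -/

open SimpleGraph Finset

theorem ceil_natCast_div_two {K : Type*} [Field K] [LinearOrder K] [IsStrictOrderedRing K]
    [FloorRing K] (N : ℕ) : ⌈(N : K) / 2⌉ = ((N + 1) / 2 : ℕ) := by
  rw [Int.ceil_eq_iff]
  rcases Nat.even_or_odd' N with ⟨j, rfl | rfl⟩
  · rw [show (2 * j + 1) / 2 = j by omega]; push_cast; constructor <;> linarith
  · rw [show (2 * j + 1 + 1) / 2 = j + 1 by omega]; push_cast; constructor <;> linarith

theorem degBound_mul_eq {k : ℕ} (hk : k ≠ 0) (m : ℕ) :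
    degBound (k * m) k =
      (((k * m + 1) / 2 + (k * m + 2) / (2 * ((k + 2) / 2)) : ℕ) : ℚ) - m := by
  have hceil_k : ⌈((k : ℚ) + 1) / 2⌉ = ((k + 2) / 2 : ℕ) := by
    rw [← Nat.cast_add_one, ceil_natCast_div_two]
  have hfloor : ⌊((k * m : ℕ) + 2 : ℚ) / (2 * (((k + 2) / 2 : ℕ) : ℚ))⌋
      = ((k * m + 2) / (2 * ((k + 2) / 2)) : ℕ) := by
    rw [show ((k * m : ℕ) + 2 : ℚ) = ((k * m + 2 : ℕ) : ℚ) by push_cast; ring,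
      show (2 * (((k + 2) / 2 : ℕ) : ℚ)) = ((2 * ((k + 2) / 2) : ℕ) : ℚ) by push_cast; ring,
      Int.floor_div_natCast, Int.floor_natCast, Int.natCast_div]
  unfold degBound
  rw [ceil_natCast_div_two, hceil_k]
  simp only [Int.cast_natCast]
  rw [hfloor, Int.cast_natCast, Nat.cast_mul,
    mul_div_cancel_left₀ _ (Nat.cast_ne_zero.mpr hk)]
  push_cast
  ring

theorem half_add_one_le_div {k m : ℕ} (hk : 3 ≤ k) (hm : 2 ≤ m) (hkm : ¬(Even k ∧ m = 2)) :
    m / 2 + 1 ≤ (k * m + 2) / (2 * ((k + 2) / 2)) := by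
  rw [Nat.le_div_iff_mul_le (by omega)]
  rcases Nat.even_or_odd' k with ⟨t, rfl | rfl⟩ <;>
    rcases Nat.even_or_odd' m with ⟨s, rfl | rfl⟩
  · have hs : 2 ≤ s := by by_contra h; exact hkm ⟨even_two_mul t, by omega⟩
    have ht : 2 ≤ t := by omega
    rw [show 2 * s / 2 = s by omega, show (2 * t + 2) / 2 = t + 1 by omega]
    nlinarith
  · rw [show (2 * s + 1) / 2 = s by omega, show (2 * t + 2) / 2 = t + 1 by omega]
    nlinarith
  · rw [show 2 * s / 2 = s by omega, show (2 * t + 1 + 2) / 2 = t + 1 by omega]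
    nlinarith
  · rw [show (2 * s + 1) / 2 = s by omega, show (2 * t + 1 + 2) / 2 = t + 1 by omega]
    nlinarith

/-- With `h = (k * m - 1) / 2` we have `(m + 1) / 2 = ⌈h / k⌉`, so this says
`s - c ≤ h - ⌈h / k⌉`. -/
theorem add_half_succ_le {k m s c : ℕ} (hk : 3 ≤ k) (hs : s ≤ (k * m - 1) / 2)
    (hsc : s ≤ k * c) :
    s + (m + 1) / 2 ≤ (k * m - 1) / 2 + c := by
  by_cases hcq : (m + 1) / 2 ≤ c
  · omega
  have h1 : k * c + k + (m + 1) / 2 ≤ k * ((m + 1) / 2) + c + 1 := by nlinarith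
  have h2 : 2 * (k * ((m + 1) / 2)) ≤ k * m + k := by
    nlinarith [Nat.div_mul_le_self (m + 1) 2]
  omega

theorem natCast_lt_degBound {k m s c δ : ℕ} (hk : 3 ≤ k) (hm : 2 ≤ m)
    (hkm : ¬(Even k ∧ m = 2)) (hs : 2 * s < k * m) (hsc : s ≤ k * c) (hδ : δ + c ≤ s + 1) :
    (δ : ℚ) < degBound (k * m) k := by
  rw [degBound_mul_eq (by omega) m, lt_sub_iff_add_lt]
  have hfloor := half_add_one_le_div hk hm hkm
  have hside := add_half_succ_le hk (by omega : s ≤ (k * m - 1) / 2) hsc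
  exact_mod_cast (by omega : δ + m < (k * m + 1) / 2 + (k * m + 2) / (2 * ((k + 2) / 2)))

section

variable {V : Type*} [Fintype V] [DecidableEq V] {G : SimpleGraph V} [DecidableRel G.Adj]

theorem exists_card_le_mul_and_minDegree_add_le {ι : Type*} [Fintype ι] [DecidableEq ι]
    (P : V → ι) (hP : ∀ u w, G.Adj u w → P u ≠ P w) {S T : Finset V} (hS : S.Nonempty)
    (hST : S ⊆ T) (hN : ∀ a ∈ S, G.neighborFinset a ⊆ T) :
    ∃ c, #S ≤ Fintype.card ι * c ∧ G.minDegree + c ≤ #T := by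
  obtain ⟨a₀, ha₀⟩ := hS
  have : Nonempty ι := ⟨P a₀⟩
  obtain ⟨i, -, hi⟩ := exists_le_card_fiber_of_nsmul_le_card_of_maps_to (s := S) (f := P)
    (fun a _ => mem_univ (P a)) ⟨P a₀, mem_univ _⟩ (b := (#S : ℚ) / Fintype.card ι) (by
      rw [nsmul_eq_mul, card_univ, mul_div_cancel₀]
      exact Nat.cast_ne_zero.mpr Fintype.card_ne_zero)
  set C := {x ∈ S | P x = i}
  have hSC : #S ≤ Fintype.card ι * #C := by
    rw [div_le_iff₀ (by exact_mod_cast Fintype.card_pos)] at hi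
    exact_mod_cast hi.trans_eq (mul_comm _ _)
  obtain ⟨a, ha⟩ : C.Nonempty :=
    card_pos.1 <| Nat.pos_of_mul_pos_left ((card_pos.2 ⟨a₀, ha₀⟩).trans_le hSC)
  obtain ⟨haS, hai⟩ := mem_filter.1 ha
  have hNC : G.neighborFinset a ⊆ T \ C := fun w hw =>
    mem_sdiff.2 ⟨hN a haS hw, fun hwC =>
      hP a w ((G.mem_neighborFinset a w).1 hw) (hai.trans (mem_filter.1 hwC).2.symm)⟩
  have hCT : C ⊆ T := (filter_subset _ S).trans hST
  have hdeg : G.minDegree ≤ #T - #C := calc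
    G.minDegree ≤ G.degree a := G.minDegree_le_degree a
    _ = #(G.neighborFinset a) := (G.card_neighborFinset_eq_degree a).symm
    _ ≤ #(T \ C) := card_le_card hNC
    _ = #T - #C := card_sdiff_of_subset hCT
  exact ⟨#C, hSC, by have := card_le_card hCT; omega⟩

theorem exists_side_of_not_connected_induce (v : V) (hV : 1 < Fintype.card V)
    (h : ¬(G.induce {w | w ≠ v}).Connected) :
    ∃ S : Finset V, S.Nonempty ∧ v ∉ S ∧ 2 * #S < Fintype.card V ∧
      ∀ a ∈ S, G.neighborFinset a ⊆ insert v S := by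
  set H := G.induce {w | w ≠ v}
  have : Nonempty {w | w ≠ v} :=
    (Fintype.exists_ne_of_one_lt_card hV v).elim fun w hw => ⟨⟨w, hw⟩⟩
  obtain ⟨x, y, hxy⟩ : ∃ x y, ¬H.Reachable x y := by
    simpa [connected_iff, Preconnected, this] using h
  set A : Finset V := {w | ∃ hw : w ≠ v, H.Reachable x ⟨w, hw⟩}
  set B : Finset V := univ.erase v \ A
  have hAv : A ⊆ univ.erase v := fun w hw => by
    obtain ⟨hwv, -⟩ := (mem_filter.1 hw).2
    exact mem_erase.2 ⟨hwv, mem_univ w⟩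
  have hA : ∀ a ∈ A, G.neighborFinset a ⊆ insert v A := by
    intro a ha w hw
    obtain ⟨hav, hxa⟩ := (mem_filter.1 ha).2
    by_cases hwv : w = v
    · exact hwv ▸ mem_insert_self v A
    · exact mem_insert_of_mem (mem_filter.2 ⟨mem_univ w, hwv,
        hxa.trans (Adj.reachable (G := H) ((G.mem_neighborFinset a w).1 hw))⟩)
  have hB : ∀ b ∈ B, G.neighborFinset b ⊆ insert v B := by
    intro b hb w hw
    obtain ⟨hbv, hbA⟩ := mem_sdiff.1 hb
    by_cases hwv : w = v
    · exact hwv ▸ mem_insert_self v B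
    · refine mem_insert_of_mem
        (mem_sdiff.2 ⟨mem_erase.2 ⟨hwv, mem_univ w⟩, fun hwA => hbA ?_⟩)
      have := hA w hwA ((G.mem_neighborFinset w b).2 ((G.mem_neighborFinset b w).1 hw).symm)
      exact (mem_insert.1 this).resolve_left (mem_erase.1 hbv).1
  have hcard : #B + #A + 1 = Fintype.card V := by
    rw [card_sdiff_add_card_eq_card hAv, card_erase_add_one (mem_univ v), card_univ]
  have hxA : x.1 ∈ A := mem_filter.2 ⟨mem_univ _, x.2, Reachable.refl x⟩
  have hyB : y.1 ∈ B := mem_sdiff.2 ⟨mem_erase.2 ⟨y.2, mem_univ _⟩,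
    fun hyA => hxy (by obtain ⟨_, hr⟩ := (mem_filter.1 hyA).2; exact hr)⟩
  rcases le_total #A #B with hle | hle
  · exact ⟨A, ⟨_, hxA⟩, fun hv => (mem_erase.1 (hAv hv)).1 rfl, by omega, hA⟩
  · exact ⟨B, ⟨_, hyB⟩, fun hv => (mem_erase.1 (mem_sdiff.1 hv).1).1 rfl, by omega, hB⟩

end

/-- Let `k ≥ 3`, let `n ≥ 2k` be divisible by `k`, and let `G` be a balanced `k`-partite graph
on `n` vertices with `δ(G) ≥ ⌈n/2⌉ + ⌊(n+2)/(2⌈(k+1)/2⌉)⌋ − n/k`.  Unless `k` is even and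
`n = 2k`, the graph `G` is 2-connected. -/
theorem balanced_kpartite_two_connected
    {V : Type*} [Fintype V] [DecidableEq V] (G : SimpleGraph V) [DecidableRel G.Adj]
    (k n : ℕ) (hk : 3 ≤ k) (hn : 2 * k ≤ n) (hcard : Fintype.card V = n) (hdvd : k ∣ n)
    (hG : IsBalancedKPartite G k)
    (hδ : degBound n k ≤ (G.minDegree : ℚ))
    (hexc : ¬ (Even k ∧ n = 2 * k)) :
    TwoConnected G := by
  obtain ⟨P, -, hP⟩ := hG
  obtain ⟨m, rfl⟩ := hdvd
  have hm : 2 ≤ m := le_of_mul_le_mul_left (by linarith) (by omega : 0 < k)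
  have hkm : ¬(Even k ∧ m = 2) := fun ⟨he, hm2⟩ => hexc ⟨he, by rw [hm2, mul_comm]⟩
  have hV : 3 ≤ Fintype.card V := by rw [hcard]; nlinarith
  refine ⟨hV, fun v => by_contra fun hv => ?_⟩
  obtain ⟨S, hS, hvS, hScard, hSN⟩ := exists_side_of_not_connected_induce v (by omega) hv
  obtain ⟨c, hSc, hδc⟩ :=
    exists_card_le_mul_and_minDegree_add_le P hP hS (subset_insert v S) hSN
  rw [Fintype.card_fin] at hSc
  rw [card_insert_of_notMem hvS] at hδc
  exact (natCast_lt_degBound hk hm hkm (hcard ▸ hScard) hSc hδc).not_ge hδ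
end

section
/- Let k ≥ 4 be even, let n = 2k, and let G be a balanced k-partite graph on n vertices with parts V_1,…,V_k (each of size 2) and δ(G) ≥ n/2 − 1. If G is not 2-connected, then there exists a set X ⊆ V(G) with |X ∩ V_i| = 1 for every i ∈ [k] such that: X induces a complete graph in G; every vertex of Y := V(G)∖X has at least k−1 neighbors in Y ∪ X; and there is a vertex c ∈ X such that every edge of G between X and Y is incident to c. -/
open SimpleGraph Finset

/-!
Let `v` be a cut vertex. A component `S` of `G - v` and the rest `T` of `G - v` only see
themselves and `v`, so each has at least `δ ≥ k - 1` vertices; as `|S| + |T| = 2k - 1`, one of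
them, say `S`, has exactly `k - 1`. Every vertex of `S` then has degree `k - 1` inside
`X = S ∪ {v}` of size `k`, so `X` is a `k`-clique. A `k`-clique meets each of `k` independent
parts in at most one vertex, hence in exactly one, and every edge leaving `X` leaves it at `v`.
-/

namespace SimpleGraph

theorem degree_le_card_of_neighborFinset_subset_insert {V : Type*} [Fintype V] [DecidableEq V]
    (G : SimpleGraph V) [DecidableRel G.Adj] {v w : V} {S : Finset V} (hvS : v ∉ S)
    (hwS : w ∈ S) (hN : G.neighborFinset w ⊆ insert v S) : G.degree w ≤ S.card := by
  have hsub : G.neighborFinset w ⊆ (insert v S).erase w := fun u hu =>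
    mem_erase.2 ⟨(G.ne_of_adj ((G.mem_neighborFinset w u).1 hu)).symm, hN hu⟩
  have := card_le_card hsub
  rwa [card_erase_of_mem (mem_insert_of_mem hwS), card_insert_of_notMem hvS] at this

theorem neighborFinset_subset_insert_compl {V : Type*} [Fintype V] [DecidableEq V]
    (G : SimpleGraph V) [DecidableRel G.Adj] {v : V} {S : Finset V}
    (hN : ∀ w ∈ S, G.neighborFinset w ⊆ insert v S) :
    ∀ w ∈ (insert v S)ᶜ, G.neighborFinset w ⊆ insert v (insert v S)ᶜ := by
  intro w hw u hu
  rw [mem_neighborFinset] at hu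
  by_cases huv : u = v
  · exact huv ▸ mem_insert_self _ _
  refine mem_insert_of_mem (mem_compl.2 fun huS => mem_compl.1 hw ?_)
  have huS : u ∈ S := (mem_insert.1 huS).resolve_left huv
  exact hN u huS ((G.mem_neighborFinset u w).2 hu.symm)

theorem exists_separation_of_not_connected_induce {V : Type*} [Fintype V] [DecidableEq V]
    (G : SimpleGraph V) [DecidableRel G.Adj] {v : V}
    (hv : ¬ (G.induce {w | w ≠ v}).Connected) (hV : ∃ u, u ≠ v) :
    ∃ S : Finset V, v ∉ S ∧ S.Nonempty ∧ (insert v S)ᶜ.Nonempty ∧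
      ∀ w ∈ S, G.neighborFinset w ⊆ insert v S := by
  set H := G.induce {w | w ≠ v}
  obtain ⟨u, hu⟩ := hV
  obtain ⟨a, b, hab⟩ : ∃ a b, ¬ H.Reachable a b := by
    by_contra! h
    exact hv ((connected_iff H).2 ⟨h, ⟨⟨u, hu⟩⟩⟩)
  set S : Finset V := univ.filter fun w => ∃ h : w ≠ v, H.Reachable a ⟨w, h⟩
  refine ⟨S, by simp [S], ⟨a, mem_filter.2 ⟨mem_univ _, a.2, .rfl⟩⟩,
    ⟨b, by simpa [S] using And.intro (show (b : V) ≠ v from b.2) fun _ => hab⟩, ?_⟩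
  intro w hw x hx
  rw [mem_neighborFinset] at hx
  by_cases hxv : x = v
  · exact hxv ▸ mem_insert_self _ _
  obtain ⟨hwv, hr⟩ := (mem_filter.1 hw).2
  exact mem_insert_of_mem <| mem_filter.2
    ⟨mem_univ x, hxv, hr.trans (Adj.reachable (show G.Adj w x from hx))⟩

theorem exists_separation_card_eq {V : Type*} [Fintype V] [DecidableEq V]
    (G : SimpleGraph V) [DecidableRel G.Adj] {k : ℕ} (hcard : Fintype.card V = 2 * k)
    (hδ : k - 1 ≤ G.minDegree) {v : V} (hv : ¬ (G.induce {w | w ≠ v}).Connected)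
    (hV : ∃ u, u ≠ v) :
    ∃ S : Finset V, v ∉ S ∧ S.card = k - 1 ∧ ∀ w ∈ S, G.neighborFinset w ⊆ insert v S := by
  obtain ⟨S, hvS, ⟨a, ha⟩, ⟨b, hb⟩, hN⟩ := G.exists_separation_of_not_connected_induce hv hV
  have hN' := G.neighborFinset_subset_insert_compl hN
  have hvT : v ∉ (insert v S)ᶜ := by simp
  have hS : k - 1 ≤ S.card := hδ.trans <| (G.minDegree_le_degree a).trans <|
    G.degree_le_card_of_neighborFinset_subset_insert hvS ha (hN a ha)
  have hT : k - 1 ≤ (insert v S)ᶜ.card := hδ.trans <| (G.minDegree_le_degree b).trans <|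
    G.degree_le_card_of_neighborFinset_subset_insert hvT hb (hN' b hb)
  have hsum := card_add_card_compl (insert v S)
  rw [card_insert_of_notMem hvS, hcard] at hsum
  by_cases hSk : S.card = k - 1
  · exact ⟨S, hvS, hSk, hN⟩
  · exact ⟨_, hvT, by omega, hN'⟩

theorem isClique_insert_of_neighborFinset_subset {V : Type*} [Fintype V] [DecidableEq V]
    (G : SimpleGraph V) [DecidableRel G.Adj] {v : V} {S : Finset V} (hvS : v ∉ S)
    (hN : ∀ w ∈ S, G.neighborFinset w ⊆ insert v S) (hdeg : ∀ w ∈ S, S.card ≤ G.degree w) :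
    G.IsClique (insert v S : Finset V) := by
  have hadj : ∀ w ∈ S, ∀ u ∈ insert v S, u ≠ w → G.Adj w u := by
    intro w hw u hu huw
    have hnbr : G.neighborFinset w = (insert v S).erase w := by
      refine eq_of_subset_of_card_le (fun x hx => mem_erase.2
        ⟨(G.ne_of_adj ((G.mem_neighborFinset w x).1 hx)).symm, hN w hw hx⟩) ?_
      rw [card_erase_of_mem (mem_insert_of_mem hw), card_insert_of_notMem hvS]
      exact hdeg w hw
    exact (G.mem_neighborFinset w u).1 (hnbr ▸ mem_erase.2 ⟨huw, hu⟩)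
  rw [coe_insert, isClique_insert]
  exact ⟨fun x hx y hy hxy => hadj x hx y (mem_insert_of_mem hy) (Ne.symm hxy),
    fun y hy hvy => (hadj y hy v (mem_insert_self v S) hvy).symm⟩

theorem IsClique.card_inter_eq_one {V ι : Type*} [DecidableEq V] [Fintype ι]
    {G : SimpleGraph V} {X : Finset V} (hX : G.IsClique (X : Set V)) (P : ι → Finset V)
    (hdisj : ∀ i j, i ≠ j → Disjoint (P i) (P j)) (hcover : ∀ v, ∃ i, v ∈ P i)
    (hindep : ∀ i, ∀ u ∈ P i, ∀ v ∈ P i, ¬ G.Adj u v) (hXcard : X.card = Fintype.card ι)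
    (i : ι) : (X ∩ P i).card = 1 := by
  have hle : ∀ j, (X ∩ P j).card ≤ 1 := fun j => card_le_one.2 fun x hx y hy => by
    rw [mem_inter] at hx hy
    by_contra hxy
    exact hindep j x hx.2 y hy.2 (hX hx.1 hy.1 hxy)
  have hX_eq : X = univ.biUnion fun j => X ∩ P j := by
    ext x
    simpa using fun hx => hcover x
  have hsum : ∑ j, (X ∩ P j).card = ∑ _j : ι, 1 := by
    rw [sum_const, card_univ, smul_eq_mul, mul_one, ← hXcard, ← card_biUnion, ← hX_eq]
    exact fun j _ l _ hjl => (hdisj j l hjl).mono inter_subset_right inter_subset_right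
  exact (sum_eq_sum_iff_of_le fun j _ => hle j).1 hsum i (mem_univ i)

end SimpleGraph

theorem not_two_connected_structure_general
    {V : Type*} [Fintype V] [DecidableEq V] (G : SimpleGraph V) [DecidableRel G.Adj]
    (k : ℕ) (hk : 4 ≤ k) (hcard : Fintype.card V = 2 * k)
    (P : Fin k → Finset V)
    (hdisj : ∀ i j, i ≠ j → Disjoint (P i) (P j))
    (hcover : ∀ v : V, ∃ i, v ∈ P i)
    (hindep : ∀ i, ∀ u ∈ P i, ∀ v ∈ P i, ¬ G.Adj u v)
    (hδ : k - 1 ≤ G.minDegree)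
    (h2 : ¬ TwoConnected G) :
    ∃ X : Finset V,
      (∀ i, (X ∩ P i).card = 1) ∧
      (∀ u ∈ X, ∀ v ∈ X, u ≠ v → G.Adj u v) ∧
      (∀ y ∈ Finset.univ \ X,
        k - 1 ≤ (((Finset.univ \ X) ∪ X).filter (fun w => G.Adj y w)).card) ∧
      (∃ c ∈ X, ∀ x ∈ X, ∀ y ∈ Finset.univ \ X, G.Adj x y → x = c ∨ y = c) := by
  obtain ⟨v, hv⟩ : ∃ v, ¬ (G.induce {w | w ≠ v}).Connected := by
    simpa [TwoConnected, show 3 ≤ Fintype.card V by omega] using h2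
  obtain ⟨S, hvS, hSk, hN⟩ := G.exists_separation_card_eq hcard hδ hv
    (Fintype.exists_ne_of_one_lt_card (by omega) v)
  have hdeg : ∀ w, k - 1 ≤ G.degree w := fun w => hδ.trans (G.minDegree_le_degree w)
  have hX := G.isClique_insert_of_neighborFinset_subset hvS hN fun w _ => hSk ▸ hdeg w
  refine ⟨insert v S, hX.card_inter_eq_one P hdisj hcover hindep ?_, fun x hx y hy => hX hx hy,
    fun y _ => ?_, v, mem_insert_self v S, fun x hx y hy hxy => ?_⟩
  · rw [card_insert_of_notMem hvS, hSk, Fintype.card_fin]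
    omega
  · rw [sdiff_union_of_subset (subset_univ _), ← neighborFinset_eq_filter]
    exact hdeg y
  · rcases mem_insert.1 hx with rfl | hxS
    · exact Or.inl rfl
    · exact absurd (hN x hxS ((G.mem_neighborFinset x y).2 hxy)) (mem_sdiff.1 hy).2

/-- Let `k ≥ 4` be even, let `G` be a balanced `k`-partite graph on `n = 2k` vertices with
parts `P 0, …, P (k-1)` (each of size 2) and `δ(G) ≥ n/2 − 1 = k − 1`.  If `G` is not
2-connected, then there is a transversal `X` (one vertex per part) inducing a complete
graph, such that every vertex of `Y := V ∖ X` has at least `k − 1` neighbours in `Y ∪ X`,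
and some vertex `c ∈ X` is incident to every edge between `X` and `Y`. -/
theorem not_two_connected_structure
    {V : Type*} [Fintype V] [DecidableEq V] (G : SimpleGraph V) [DecidableRel G.Adj]
    (k : ℕ) (hk : 4 ≤ k) (hke : Even k) (hcard : Fintype.card V = 2 * k)
    (P : Fin k → Finset V)
    (hsize : ∀ i, (P i).card = 2)
    (hdisj : ∀ i j, i ≠ j → Disjoint (P i) (P j))
    (hcover : ∀ v : V, ∃ i, v ∈ P i)
    (hindep : ∀ i, ∀ u ∈ P i, ∀ v ∈ P i, ¬ G.Adj u v)
    (hδ : k - 1 ≤ G.minDegree)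
    (h2 : ¬ TwoConnected G) :
    ∃ X : Finset V,
      (∀ i, (X ∩ P i).card = 1) ∧
      (∀ u ∈ X, ∀ v ∈ X, u ≠ v → G.Adj u v) ∧
      (∀ y ∈ Finset.univ \ X,
        k - 1 ≤ (((Finset.univ \ X) ∪ X).filter (fun w => G.Adj y w)).card) ∧
      (∃ c ∈ X, ∀ x ∈ X, ∀ y ∈ Finset.univ \ X, G.Adj x y → x = c ∨ y = c) :=
  not_two_connected_structure_general G k hk hcard P hdisj hcover hindep hδ h2
end
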